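/- arXiv:2409.20051 — 3 statements merged into one kernel-verified Lean document; each statement's English description precedes it below -/
import Mathlib

section
/- Let σ : Sym⁺⁺(3) → Sym(3) be isotropic and Fréchet differentiable, and let F : ℝ → GL(3,ℝ) be differentiable at t₀. Set B(t) = F(t) F(t)ᵀ, L = F'(t₀) F(t₀)⁻¹, D = sym L, W = skew L, and B₀ = B(t₀). Then the Zaremba–Jaumann rate of σ(B(t)) at t₀ satisfies (d/dt)[σ(B(t))]|_{t₀} − W σ(B₀) + σ(B₀) W = Dσ(B₀).(D B₀ + B₀ D). -/
/-!
Isotropy says that `σ` commutes with conjugation by the rotations `Q s = exp (s W)`, `W` skew.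
Differentiating `σ (Q(s) B Q(s)ᵀ) = Q(s) σ(B) Q(s)ᵀ` at `s = 0` gives
`Dσ(B).(W B - B W) = W σ(B) - σ(B) W`.
Along `B(t) = F(t) F(t)ᵀ` one has `B' = L B₀ + B₀ Lᵀ = (D B₀ + B₀ D) + (W B₀ - B₀ W)`, so by the chain
rule the spin part of `B'` contributes exactly the corotational terms `W σ(B₀) - σ(B₀) W`.
-/

open Matrix

noncomputable section

abbrev M3 := Matrix (Fin 3) (Fin 3) ℝ

attribute [local instance] Matrix.frobeniusNormedAddCommGroup Matrix.frobeniusNormedSpace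

open NormedSpace

attribute [local instance] Matrix.frobeniusNormedRing Matrix.frobeniusNormedAlgebra

namespace Matrix

variable {m n : Type*} [Fintype m] [Fintype n]

theorem _root_.HasDerivAt.matrix_transpose {f : ℝ → Matrix m n ℝ} {f' : Matrix m n ℝ} {t : ℝ}
    (hf : HasDerivAt f f' t) : HasDerivAt (fun s => (f s)ᵀ) f'ᵀ t :=
  (transposeLinearEquiv m n ℝ ℝ).toLinearMap.toContinuousLinearMap.hasFDerivAt.comp_hasDerivAt t hf

variable [DecidableEq n]

theorem _root_.HasDerivAt.matrix_mul_mul_transpose {f : ℝ → Matrix n n ℝ} {f' : Matrix n n ℝ}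
    {t : ℝ} (hf : HasDerivAt f f' t) (X : Matrix n n ℝ) :
    HasDerivAt (fun s => f s * X * (f s)ᵀ) (f' * X * (f t)ᵀ + f t * X * f'ᵀ) t :=
  (hf.mul_const X).mul hf.matrix_transpose

theorem transpose_exp_mul_exp_of_transpose_eq_neg {W : Matrix n n ℝ} (hW : Wᵀ = -W) :
    (exp W)ᵀ * exp W = 1 := by
  rw [← exp_transpose, hW, ← exp_add_of_commute _ _ (Commute.refl W).neg_left, neg_add_cancel,
    exp_zero]

theorem PosDef.mul_mul_transpose_of_isUnit {A X : Matrix n n ℝ} (hX : X.PosDef)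
    (hA : IsUnit A) : (A * X * Aᵀ).PosDef := by
  simpa only [conjTranspose_eq_transpose_of_trivial] using
    hX.mul_mul_conjTranspose_same (vecMul_injective_of_isUnit hA)

theorem PosDef.mul_transpose_self_of_isUnit {A : Matrix n n ℝ} (hA : IsUnit A) :
    (A * Aᵀ).PosDef := by
  simpa using PosDef.one.mul_mul_transpose_of_isUnit hA

def IsIsotropic (σ : Matrix n n ℝ → Matrix n n ℝ) : Prop :=
  ∀ Q X : Matrix n n ℝ, Qᵀ * Q = 1 → X.PosDef → σ (Q * X * Qᵀ) = Q * σ X * Qᵀ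

theorem IsIsotropic.hasFDerivWithinAt_infinitesimal_rotation {σ : Matrix n n ℝ → Matrix n n ℝ}
    (hσ : IsIsotropic σ) {T : Matrix n n ℝ →L[ℝ] Matrix n n ℝ} {B W : Matrix n n ℝ}
    (hT : HasFDerivWithinAt σ T {X | X.PosDef} B) (hB : B.PosDef) (hW : Wᵀ = -W) :
    T (W * B + B * Wᵀ) = W * σ B + σ B * Wᵀ := by
  let Q : ℝ → Matrix n n ℝ := fun s => exp (s • W)
  have hQ_orth (s : ℝ) : (Q s)ᵀ * Q s = 1 :=
    transpose_exp_mul_exp_of_transpose_eq_neg (by rw [transpose_smul, hW, smul_neg])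
  have hQ0 : Q 0 = 1 := by simp [Q]
  have hQ' : HasDerivAt Q W 0 := by
    have h := hasDerivAt_exp_smul_const (𝕂 := ℝ) W (0 : ℝ)
    rw [zero_smul, exp_zero, one_mul] at h
    exact h
  have hconj (X : Matrix n n ℝ) :
      HasDerivAt (fun s => Q s * X * (Q s)ᵀ) (W * X + X * Wᵀ) 0 := by
    simpa [hQ0] using hQ'.matrix_mul_mul_transpose X
  have hσ_conj : HasDerivAt (fun s => σ (Q s * B * (Q s)ᵀ)) (T (W * B + B * Wᵀ)) 0 :=
    (hT.comp_hasDerivWithinAt_of_eq 0 (hconj B).hasDerivWithinAt (s := Set.univ)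
      (fun s _ => hB.mul_mul_transpose_of_isUnit (isUnit_exp _)) (by simp [hQ0])).hasDerivAt
      Filter.univ_mem
  have hrot : (fun s => σ (Q s * B * (Q s)ᵀ)) = fun s => Q s * σ B * (Q s)ᵀ :=
    funext fun s => hσ (Q s) B (hQ_orth s) hB
  exact hσ_conj.unique (hrot ▸ hconj (σ B))

end Matrix

theorem zaremba_jaumann_formula_general
    (σ : M3 → M3)
    (hiso : ∀ (Q X : M3), Qᵀ * Q = 1 → X.PosDef → σ (Q * X * Qᵀ) = Q * σ X * Qᵀ)
    (F : ℝ → M3) (hFinv : ∀ t, IsUnit (F t).det)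
    (t₀ : ℝ) (F' : M3) (hF : HasDerivAt F F' t₀)
    (T : M3 →L[ℝ] M3)
    (hT : HasFDerivWithinAt σ T {X : M3 | X.PosDef} (F t₀ * (F t₀)ᵀ))
    (L D W B₀ : M3)
    (hL : L = F' * (F t₀)⁻¹)
    (hD : D = (1 / 2 : ℝ) • (L + Lᵀ))
    (hW : W = (1 / 2 : ℝ) • (L - Lᵀ))
    (hB₀ : B₀ = F t₀ * (F t₀)ᵀ) :
    HasDerivAt (fun t => σ (F t * (F t)ᵀ))
      (T (D * B₀ + B₀ * D) + W * σ B₀ - σ B₀ * W) t₀ := by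
  have hFunit (t : ℝ) : IsUnit (F t) := (isUnit_iff_isUnit_det _).mpr (hFinv t)
  have hWskew : Wᵀ = -W := by
    rw [hW, transpose_smul, transpose_sub, transpose_transpose, ← smul_neg, neg_sub]
  have hF' : F' = L * F t₀ := by rw [hL, nonsing_inv_mul_cancel_right _ _ (hFinv t₀)]
  have hB' : F' * (F t₀)ᵀ + F t₀ * F'ᵀ = (D * B₀ + B₀ * D) + (W * B₀ + B₀ * Wᵀ) := by
    have hL_eq : L = D + W := by rw [hD, hW]; module
    have hLT_eq : Lᵀ = D - W := by rw [hD, hW]; module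
    rw [hF', hB₀, transpose_mul, hLT_eq, hWskew, hL_eq]
    noncomm_ring
  have hσB : HasDerivAt (fun t => σ (F t * (F t)ᵀ)) (T (F' * (F t₀)ᵀ + F t₀ * F'ᵀ)) t₀ :=
    (hT.comp_hasDerivWithinAt t₀ (hF.mul hF.matrix_transpose).hasDerivWithinAt (s := Set.univ)
      (fun t _ => PosDef.mul_transpose_self_of_isUnit (hFunit t))).hasDerivAt Filter.univ_mem
  have hspin := IsIsotropic.hasFDerivWithinAt_infinitesimal_rotation hiso (hB₀ ▸ hT)
    (hB₀ ▸ PosDef.mul_transpose_self_of_isUnit (hFunit t₀)) hWskew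
  convert hσB using 1
  rw [hB', map_add T (D * B₀ + B₀ * D), hspin, hWskew]
  noncomm_ring

/-- Formula for the Zaremba–Jaumann rate: for an isotropic, Fréchet
differentiable `σ : Sym⁺⁺(3) → Sym(3)` and a differentiable curve `F` of invertible
matrices, with `B = F Fᵀ`, `L = F' F⁻¹`, `D = sym L`, `W = skew L`, one has
`(d/dt)[σ(B(t))] − W σ(B₀) + σ(B₀) W = Dσ(B₀).(D B₀ + B₀ D)`. -/
theorem zaremba_jaumann_formula
    (σ : M3 → M3)
    (hmaps : ∀ X : M3, X.PosDef → (σ X).IsSymm)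
    (hiso : ∀ (Q X : M3), Qᵀ * Q = 1 → X.PosDef → σ (Q * X * Qᵀ) = Q * σ X * Qᵀ)
    (F : ℝ → M3) (hFinv : ∀ t, IsUnit (F t).det)
    (t₀ : ℝ) (F' : M3) (hF : HasDerivAt F F' t₀)
    (T : M3 →L[ℝ] M3)
    (hT : HasFDerivWithinAt σ T {X : M3 | X.PosDef} (F t₀ * (F t₀)ᵀ))
    (L D W B₀ : M3)
    (hL : L = F' * (F t₀)⁻¹)
    (hD : D = (1 / 2 : ℝ) • (L + Lᵀ))
    (hW : W = (1 / 2 : ℝ) • (L - Lᵀ))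
    (hB₀ : B₀ = F t₀ * (F t₀)ᵀ) :
    HasDerivAt (fun t => σ (F t * (F t)ᵀ))
      (T (D * B₀ + B₀ * D) + W * σ B₀ - σ B₀ * W) t₀ :=
  zaremba_jaumann_formula_general σ hiso F hFinv t₀ F' hF T hT L D W B₀ hL hD hW hB₀
end
end

section
/- Let B ∈ Sym⁺⁺(3) and let L : Sym(3) → Sym(3) be the Fréchet derivative at B of the matrix logarithm log : Sym⁺⁺(3) → Sym(3). Then there exists c > 0 (depending on B) such that ⟨L(B D + D B), D⟩ ≥ c ‖D‖² for all D ∈ Sym(3); in particular ⟨L(B D + D B), D⟩ > 0 for every D ∈ Sym(3) \ {0}, even though L(B D + D B) ≠ 2 D in general. -/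
/-!
Diagonalize `B = U diag(λ) Uᵀ`, so that `X = U diag(log λ) Uᵀ` is its logarithm. Writing a
symmetric `D` as `U A Uᵀ`, the direction `BD + DB` splits as `B E + [W, B]`, where `E` is
`U (2 A') Uᵀ` for the part `A'` of `A` between equal eigenvalues (so `E` commutes with `B` and
`X`) and `W` is antisymmetric. Since `L` is only a derivative within `Sym⁺⁺(3)`, it is evaluated
along curves of positive definite matrices whose logarithm is known: `t ↦ exp (X + t E)` shows
`L (B E) = E`, and the rotations `t ↦ exp (t W) B exp (t W)ᵀ` show `L [W, B] = [W, X]`. Hence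
`L (BD + DB) = U (κ ⊙ A) Uᵀ` with `κᵢⱼ = (λᵢ + λⱼ) (log λⱼ - log λᵢ) / (λⱼ - λᵢ) > 0`, and
`⟨L (BD + DB), D⟩ = ∑ κᵢⱼ Aᵢⱼ² ≥ (min κ) ‖D‖²`.
-/

open Matrix

noncomputable section

open scoped Classical

attribute [local instance] Matrix.frobeniusNormedAddCommGroup Matrix.frobeniusNormedSpace

/-- The principal matrix logarithm on `Sym⁺⁺(3)`: for positive definite symmetric `B`,
`matrixLog B` is the unique symmetric matrix `X` with `exp X = B` (junk value otherwise). -/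
noncomputable def matrixLog (B : M3) : M3 :=
  if h : ∃ X : M3, X.IsSymm ∧ NormedSpace.exp X = B then h.choose else 0

attribute [local instance] Matrix.frobeniusNormedRing Matrix.frobeniusNormedAlgebra

open NormedSpace

namespace Matrix

section Exp

variable {n : Type*} [Fintype n] [DecidableEq n]

theorem injOn_exp_isSymm : Set.InjOn (exp : Matrix n n ℝ → Matrix n n ℝ) {X | X.IsSymm} := by
  intro X hX Y hY h
  have hX' : IsSelfAdjoint X := isHermitian_iff_isSymm.mpr hX
  have hY' : IsSelfAdjoint Y := isHermitian_iff_isSymm.mpr hY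
  -- the matrix CFC is stated for the product topology, which the Frobenius norm does not give
  -- reducibly (the L2 operator norm does)
  open scoped Matrix.Norms.L2Operator in
  rw [← CFC.log_exp X hX', h, CFC.log_exp Y hY']

theorem IsSymm.posDef_exp {X : Matrix n n ℝ} (hX : X.IsSymm) : (NormedSpace.exp X).PosDef := by
  have hX' : IsSelfAdjoint X := isHermitian_iff_isSymm.mpr hX
  open scoped Matrix.Norms.L2Operator MatrixOrder in
  exact ((isUnit_exp X).isStrictlyPositive hX'.exp_nonneg).posDef

theorem exp_diagonal_log {d : n → ℝ} (hd : ∀ i, 0 < d i) :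
    exp (diagonal (Real.log ∘ d)) = diagonal d := by
  rw [exp_diagonal, Pi.exp_def]
  congr 1
  funext i
  rw [Function.comp_apply, ← Real.exp_eq_exp_ℝ, Real.exp_log (hd i)]

theorem exp_conjStarAlgAut (U : unitary (Matrix n n ℝ)) (A : Matrix n n ℝ) :
    exp (Unitary.conjStarAlgAut ℝ _ U A) = Unitary.conjStarAlgAut ℝ _ U (exp A) := by
  have hinv : (star U : Matrix n n ℝ) = (U : Matrix n n ℝ)⁻¹ :=
    (inv_eq_right_inv (Unitary.coe_mul_star_self U)).symm
  simp only [Unitary.conjStarAlgAut_apply, hinv]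
  exact exp_conj _ A Unitary.isUnit_coe

theorem exp_conj_exp_smul_of_transpose_eq_neg {W : Matrix n n ℝ} (hW : Wᵀ = -W)
    (X : Matrix n n ℝ) (t : ℝ) :
    exp (exp (t • W) * X * (exp (t • W))ᵀ) = exp (t • W) * exp X * (exp (t • W))ᵀ := by
  have hinv : (exp (t • W))ᵀ = (exp (t • W))⁻¹ := by
    rw [← exp_transpose, transpose_smul, hW, smul_neg, exp_neg]
  rw [hinv, exp_conj _ X (isUnit_exp _)]

theorem hasDerivAt_exp_add_smul_of_commute {X E : Matrix n n ℝ} (h : Commute X E) :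
    HasDerivAt (fun t : ℝ => exp (X + t • E)) (exp X * E) 0 := by
  have hsplit : (fun t : ℝ => exp (X + t • E)) = fun t => exp X * exp (t • E) :=
    funext fun t => exp_add_of_commute _ _ (h.smul_right t)
  have hderiv := (hasDerivAt_exp_smul_const E (0 : ℝ)).const_mul (exp X)
  rw [zero_smul, exp_zero, one_mul] at hderiv
  rw [hsplit]
  exact hderiv

theorem hasDerivAt_exp_smul_mul_mul_transpose (W A : Matrix n n ℝ) :
    HasDerivAt (fun t : ℝ => exp (t • W) * A * (exp (t • W))ᵀ) (W * A + A * Wᵀ) 0 := by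
  have hderiv := ((hasDerivAt_exp_smul_const W (0 : ℝ)).mul_const A).mul
    (hasDerivAt_exp_smul_const Wᵀ (0 : ℝ))
  simp only [zero_smul, exp_zero, one_mul, mul_one] at hderiv
  simp only [← exp_transpose, transpose_smul]
  exact hderiv

end Exp

theorem transpose_starAlgEquiv_apply {n R : Type*} [Fintype n] [CommSemiring R] [StarRing R]
    [TrivialStar R] (f : Matrix n n R ≃⋆ₐ[R] Matrix n n R) (A : Matrix n n R) :
    (f A)ᵀ = f Aᵀ := by
  simpa only [star_eq_conjTranspose, conjTranspose_eq_transpose_of_trivial] using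
    (map_star f A).symm

theorem trace_conjStarAlgAut {n R : Type*} [Fintype n] [DecidableEq n] [CommRing R] [StarRing R]
    (U : unitary (Matrix n n R)) (A : Matrix n n R) :
    trace (Unitary.conjStarAlgAut R _ U A) = trace A := by
  rw [Unitary.conjStarAlgAut_apply, trace_mul_cycle, Unitary.coe_star_mul_self, one_mul]

theorem mul_trace_mul_transpose_le_trace_hadamard_mul_transpose {n R : Type*} [Fintype n]
    [CommRing R] [LinearOrder R] [IsStrictOrderedRing R] {κ : Matrix n n R} {c : R}
    (hc : ∀ i j, c ≤ κ i j) (A : Matrix n n R) :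
    c * trace (A * Aᵀ) ≤ trace ((κ ⊙ A) * Aᵀ) := by
  rw [← sum_hadamard_eq, ← sum_hadamard_eq, Finset.mul_sum]
  refine Finset.sum_le_sum fun i _ => ?_
  rw [Finset.mul_sum]
  refine Finset.sum_le_sum fun j _ => ?_
  simpa only [hadamard_apply, mul_assoc] using
    mul_le_mul_of_nonneg_right (hc i j) (mul_self_nonneg (A i j))

theorem trace_mul_transpose_self_pos {m n : Type*} [Fintype m] [Fintype n] {D : Matrix m n ℝ}
    (hD : D ≠ 0) : 0 < trace (D * Dᵀ) := by
  have hnonneg := (posSemidef_self_mul_conjTranspose D).trace_nonneg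
  have hne := mt trace_mul_conjTranspose_self_eq_zero_iff.mp hD
  simp only [conjTranspose_eq_transpose_of_trivial] at hnonneg hne
  exact hnonneg.lt_of_ne' hne

section Splitting

variable {n K : Type*} [Field K]

def commutantPart (d : n → K) (A : Matrix n n K) : Matrix n n K :=
  of fun i j => if d i = d j then A i j else 0

def rotationPart (d : n → K) (A : Matrix n n K) : Matrix n n K :=
  of fun i j => if d i = d j then 0 else (d i + d j) / (d j - d i) * A i j

theorem commute_diagonal_comp_commutantPart [Fintype n] [DecidableEq n] (d : n → K) (f : K → K)
    (A : Matrix n n K) : Commute (diagonal (f ∘ d)) (commutantPart d A) := by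
  ext i j
  by_cases h : d i = d j <;> simp [commutantPart, h, mul_comm]

theorem IsSymm.commutantPart {A : Matrix n n K} (hA : A.IsSymm) (d : n → K) :
    (commutantPart d A).IsSymm := by
  ext i j
  by_cases h : d i = d j
  · simp [Matrix.commutantPart, h, hA.apply i j]
  · simp [Matrix.commutantPart, h, Ne.symm h]

theorem IsSymm.transpose_rotationPart {A : Matrix n n K} (hA : A.IsSymm) (d : n → K) :
    (rotationPart d A)ᵀ = -rotationPart d A := by
  ext i j
  by_cases h : d i = d j
  · simp [rotationPart, h]
  · have hij : d i - d j ≠ 0 := sub_ne_zero.mpr h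
    have hji : d j - d i ≠ 0 := sub_ne_zero.mpr (Ne.symm h)
    simp only [transpose_apply, rotationPart, of_apply, neg_apply, h, Ne.symm h, if_false,
      hA.apply i j]
    field_simp
    ring

theorem diagonal_mul_add_mul_diagonal [Fintype n] [DecidableEq n] (d : n → K)
    (A : Matrix n n K) :
    diagonal d * A + A * diagonal d = diagonal d * ((2 : K) • commutantPart d A) +
      (rotationPart d A * diagonal d - diagonal d * rotationPart d A) := by
  ext i j
  by_cases h : d i = d j
  · simp only [add_apply, diagonal_mul, h, mul_diagonal, commutantPart, smul_of, rotationPart,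
      of_apply, Pi.smul_apply, ↓reduceIte, smul_eq_mul, sub_apply, zero_mul, mul_zero, sub_self,
      add_zero]
    ring
  · have hji : d j - d i ≠ 0 := sub_ne_zero.mpr (Ne.symm h)
    simp only [add_apply, diagonal_mul, mul_diagonal, commutantPart, smul_of, rotationPart,
      of_apply, Pi.smul_apply, h, ↓reduceIte, smul_eq_mul, mul_zero, sub_apply, zero_add]
    field_simp

end Splitting

end Matrix

/-- The diagonal value `2` is the limit of `(a + b) * slope log a b` as `b → a`. -/
def logKernel {n : Type*} (d : n → ℝ) : Matrix n n ℝ :=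
  of fun i j => if d i = d j then 2 else (d i + d j) * slope Real.log (d i) (d j)

theorem logKernel_pos {n : Type*} {d : n → ℝ} (hd : ∀ i, 0 < d i) (i j : n) :
    0 < logKernel d i j := by
  by_cases h : d i = d j
  · simp [logKernel, h]
  · simp only [logKernel, of_apply, h, if_false]
    exact mul_pos (add_pos (hd i) (hd j)) (Real.strictMonoOn_log.slope_pos (hd i) (hd j) h)

theorem two_smul_commutantPart_add_commutator_rotationPart {n : Type*} [Fintype n]
    [DecidableEq n] (d : n → ℝ) (A : Matrix n n ℝ) :
    (2 : ℝ) • commutantPart d A + (rotationPart d A * diagonal (Real.log ∘ d) -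
      diagonal (Real.log ∘ d) * rotationPart d A) = logKernel d ⊙ A := by
  ext i j
  by_cases h : d i = d j
  · simp [commutantPart, rotationPart, logKernel, h]
  · have hji : d j - d i ≠ 0 := sub_ne_zero.mpr (Ne.symm h)
    simp only [commutantPart, smul_of, rotationPart, Matrix.add_apply, of_apply, Pi.smul_apply,
      h, ↓reduceIte, smul_eq_mul, mul_zero, Matrix.sub_apply, mul_diagonal, Function.comp_apply,
      diagonal_mul, logKernel, slope_def_field, hadamard_apply]
    field_simp
    ring

theorem matrixLog_exp {X : M3} (hX : X.IsSymm) : matrixLog (exp X) = X := by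
  have h : ∃ Y : M3, Y.IsSymm ∧ exp Y = exp X := ⟨X, hX, rfl⟩
  rw [matrixLog, dif_pos h]
  exact injOn_exp_isSymm h.choose_spec.1 hX h.choose_spec.2

theorem matrixLog_deriv_apply_of_curve {B : M3} {L : M3 →L[ℝ] M3}
    (hL : HasFDerivWithinAt matrixLog L {X : M3 | X.PosDef} B) {Y : ℝ → M3} {Y' V : M3}
    (hY : ∀ t, (Y t).IsSymm) (hY₀ : exp (Y 0) = B) (hY' : HasDerivAt Y Y' 0)
    (hV : HasDerivAt (fun t => exp (Y t)) V 0) : L V = Y' := by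
  have hcomp := (hY₀ ▸ hL).comp_hasDerivWithinAt (0 : ℝ) hV.hasDerivWithinAt
    (fun t _ => (hY t).posDef_exp : Set.MapsTo (fun t => exp (Y t)) Set.univ _)
  have hlog : matrixLog ∘ (fun t => exp (Y t)) = Y := funext fun t => matrixLog_exp (hY t)
  rw [hasDerivWithinAt_univ, hlog] at hcomp
  exact hcomp.unique hY'

theorem matrixLog_deriv_apply_mul_of_commute {B : M3} {L : M3 →L[ℝ] M3}
    (hL : HasFDerivWithinAt matrixLog L {X : M3 | X.PosDef} B) {X E : M3} (hX : X.IsSymm)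
    (hXB : exp X = B) (hE : E.IsSymm) (hXE : Commute X E) : L (B * E) = E := by
  refine matrixLog_deriv_apply_of_curve hL (Y := fun t => X + t • E)
    (fun t => hX.add (hE.smul t)) (by simpa using hXB) ?_
    (hXB ▸ hasDerivAt_exp_add_smul_of_commute hXE)
  exact (((hasDerivAt_id (0 : ℝ)).smul_const E).const_add X).congr_deriv (one_smul _ _)

theorem matrixLog_deriv_apply_commutator {B : M3} {L : M3 →L[ℝ] M3}
    (hL : HasFDerivWithinAt matrixLog L {X : M3 | X.PosDef} B) {X W : M3} (hX : X.IsSymm)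
    (hXB : exp X = B) (hW : Wᵀ = -W) : L (W * B - B * W) = W * X - X * W := by
  have hsymm : ∀ t : ℝ, (exp (t • W) * X * (exp (t • W))ᵀ).IsSymm := fun t => by
    simp [IsSymm, transpose_mul, hX.eq, mul_assoc]
  have hcurve := fun t : ℝ => (exp_conj_exp_smul_of_transpose_eq_neg hW X t).trans (by rw [hXB])
  have h := matrixLog_deriv_apply_of_curve hL (V := W * B + B * Wᵀ) hsymm (by simp [hXB])
    (hasDerivAt_exp_smul_mul_mul_transpose W X)
    (by simpa only [hcurve] using hasDerivAt_exp_smul_mul_mul_transpose W B)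
  simpa [hW, sub_eq_add_neg] using h

theorem matrixLog_deriv_apply_anticommutator {B : M3} {L : M3 →L[ℝ] M3}
    (hL : HasFDerivWithinAt matrixLog L {X : M3 | X.PosDef} B) (U : unitary M3) {d : Fin 3 → ℝ}
    (hd : ∀ i, 0 < d i) (hB : Unitary.conjStarAlgAut ℝ M3 U (diagonal d) = B) {A : M3}
    (hA : A.IsSymm) :
    L (B * Unitary.conjStarAlgAut ℝ M3 U A + Unitary.conjStarAlgAut ℝ M3 U A * B) =
      Unitary.conjStarAlgAut ℝ M3 U (logKernel d ⊙ A) := by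
  set Φ := Unitary.conjStarAlgAut ℝ M3 U
  set X := Φ (diagonal (Real.log ∘ d))
  set E := Φ ((2 : ℝ) • commutantPart d A)
  set W := Φ (rotationPart d A)
  have hsymm : ∀ {M : M3}, M.IsSymm → (Φ M).IsSymm := fun hM => by
    rw [IsSymm, transpose_starAlgEquiv_apply, hM.eq]
  have hXB : exp X = B := by rw [exp_conjStarAlgAut, exp_diagonal_log hd, hB]
  have hX : X.IsSymm := hsymm (isSymm_diagonal _)
  have hE : E.IsSymm := hsymm ((hA.commutantPart d).smul 2)
  have hXE : Commute X E :=
    ((commute_diagonal_comp_commutantPart d Real.log A).smul_right 2).map Φ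
  have hW : Wᵀ = -W := by rw [transpose_starAlgEquiv_apply, hA.transpose_rotationPart, map_neg]
  calc L (B * Φ A + Φ A * B) = L (B * E + (W * B - B * W)) := by
        rw [← hB, ← map_mul, ← map_mul, ← map_add, diagonal_mul_add_mul_diagonal]
        simp only [map_add, map_sub, map_mul, E, W]
    _ = E + (W * X - X * W) := by
        rw [map_add, matrixLog_deriv_apply_mul_of_commute hL hX hXB hE hXE,
          matrixLog_deriv_apply_commutator hL hX hXB hW]
    _ = Φ (logKernel d ⊙ A) := by
        rw [← two_smul_commutantPart_add_commutator_rotationPart]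
        simp only [map_add, map_sub, map_mul, E, W, X]

/-- If `L` is the Fréchet derivative at `B ∈ Sym⁺⁺(3)` of the matrix
logarithm, then there is `c > 0` with `⟨L(B D + D B), D⟩ ≥ c ‖D‖²` for all `D ∈ Sym(3)`;
in particular `⟨L(B D + D B), D⟩ > 0` for all symmetric `D ≠ 0`. -/
theorem log_fderiv_BD_DB_positive (B : M3) (hB : B.PosDef)
    (L : M3 →L[ℝ] M3)
    (hL : HasFDerivWithinAt matrixLog L {X : M3 | X.PosDef} B) :
    (∃ c : ℝ, 0 < c ∧ ∀ D : M3, D.IsSymm →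
      c * Matrix.trace (D * Dᵀ) ≤ Matrix.trace (L (B * D + D * B) * Dᵀ)) ∧
    ∀ D : M3, D.IsSymm → D ≠ 0 → 0 < Matrix.trace (L (B * D + D * B) * Dᵀ) := by
  set U := hB.1.eigenvectorUnitary
  set d := hB.1.eigenvalues
  set Φ := Unitary.conjStarAlgAut ℝ M3 U
  have hΦB : Φ (diagonal d) = B := by
    simpa [Φ, U, d] using hB.1.spectral_theorem.symm
  obtain ⟨⟨i₀, j₀⟩, hmin⟩ := Finite.exists_min fun p : Fin 3 × Fin 3 => logKernel d p.1 p.2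
  have hc : 0 < logKernel d i₀ j₀ := logKernel_pos hB.eigenvalues_pos i₀ j₀
  have hcoercive : ∀ D : M3, D.IsSymm →
      logKernel d i₀ j₀ * trace (D * Dᵀ) ≤ trace (L (B * D + D * B) * Dᵀ) := by
    intro D hD
    obtain ⟨A, rfl⟩ : ∃ A, Φ A = D := ⟨Φ.symm D, Φ.apply_symm_apply D⟩
    have hA : A.IsSymm := by simpa [IsSymm, transpose_starAlgEquiv_apply] using hD
    rw [matrixLog_deriv_apply_anticommutator hL U hB.eigenvalues_pos hΦB hA,
      transpose_starAlgEquiv_apply, ← map_mul, ← map_mul, trace_conjStarAlgAut,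
      trace_conjStarAlgAut]
    exact mul_trace_mul_transpose_le_trace_hadamard_mul_transpose (fun i j => hmin (i, j)) A
  exact ⟨⟨_, hc, hcoercive⟩, fun D hD hD₀ =>
    (mul_pos hc (trace_mul_transpose_self_pos hD₀)).trans_le (hcoercive D hD)⟩
end
end

section
/- Monotonicity in the logarithmic strain does not imply monotonicity in the stretch: let μ, λ > 0 satisfy 2 μ (2 log 18 − (1/3) log 6) < (λ/3) log 2, and define the Hencky stress σ(V) = 2 μ log V + λ tr(log V) · 𝟙 for V ∈ Sym⁺⁺(3). Then for V₁ = diag(3, 1/3, 1) and V₂ = diag(1, 2, 1) one has ⟨σ(V₁) − σ(V₂), V₁ − V₂⟩ < 0; in particular V ↦ σ(V) is not Hilbert-monotone in V, although X ↦ 2 μ X + λ tr(X) 𝟙 is strictly Hilbert-monotone in X = log V. -/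
/-!
On diagonal matrices the Hencky stress is diagonal, with entries `2 μ log vᵢ + λ ∑ⱼ log vⱼ`, so
`⟨σ(V₁) − σ(V₂), V₁ − V₂⟩ = μ ((22/3) log 3 + (10/3) log 2) − (λ/3) log 2`, which is exactly the
difference of the two sides of the hypothesis on `μ` and `λ`. In the logarithmic strain the
pairing is `2 μ ‖X₁ − X₂‖² + λ (tr (X₁ − X₂))²`, positive as soon as `X₁ ≠ X₂`.
-/

open Matrix

noncomputable section

open scoped Classical

theorem Matrix.trace_mul_transpose_self_pos_s18 {m n : Type*} [Fintype m] [Fintype n]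
    {Y : Matrix m n ℝ} (hY : Y ≠ 0) : 0 < trace (Y * Yᵀ) := by
  have hnonneg := (posSemidef_self_mul_conjTranspose Y).trace_nonneg
  have hne : trace (Y * Yᴴ) ≠ 0 := trace_mul_conjTranspose_self_eq_zero_iff.not.2 hY
  rw [conjTranspose_eq_transpose_of_trivial] at hnonneg hne
  exact hnonneg.lt_of_ne' hne

theorem Matrix.IsSymm.eq_of_exp_eq {n : Type*} [Fintype n] [DecidableEq n]
    {X Y : Matrix n n ℝ} (hX : X.IsSymm) (hY : Y.IsSymm)
    (h : NormedSpace.exp X = NormedSpace.exp Y) : X = Y := by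
  -- The ℓ² operator norm makes matrices a C⋆-algebra, where `CFC.log` inverts `exp` on
  -- self-adjoint elements.
  let _ : NormedRing (Matrix n n ℝ) := Matrix.instL2OpNormedRing
  let _ : NormedAlgebra ℝ (Matrix n n ℝ) := Matrix.instL2OpNormedAlgebra
  have hXsa : IsSelfAdjoint X := isHermitian_iff_isSymm.2 hX
  have hYsa : IsSelfAdjoint Y := isHermitian_iff_isSymm.2 hY
  rw [← CFC.log_exp X hXsa, ← CFC.log_exp Y hYsa, h]

theorem Matrix.exp_diagonal_real {n : Type*} [Fintype n] [DecidableEq n] (v : n → ℝ) :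
    NormedSpace.exp (diagonal v) = diagonal (fun i => Real.exp (v i)) := by
  rw [exp_diagonal]
  congr 1
  funext i
  rw [Pi.coe_exp, Real.exp_eq_exp_ℝ]

theorem matrixLog_diagonal {v : Fin 3 → ℝ} (hv : ∀ i, 0 < v i) :
    matrixLog (diagonal v) = diagonal (fun i => Real.log (v i)) := by
  have hexp : NormedSpace.exp (diagonal fun i => Real.log (v i)) = diagonal v := by
    simp only [exp_diagonal_real, Real.exp_log (hv _)]
  have hex : ∃ X : M3, X.IsSymm ∧ NormedSpace.exp X = diagonal v :=
    ⟨_, isSymm_diagonal _, hexp⟩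
  rw [matrixLog, dif_pos hex]
  exact hex.choose_spec.1.eq_of_exp_eq (isSymm_diagonal _) (hex.choose_spec.2.trans hexp.symm)

section IsotropicLaw

variable {n : Type*} [Fintype n] [DecidableEq n]

theorem Matrix.trace_smul_add_trace_smul_one_sub_mul_transpose (a b : ℝ) (X₁ X₂ : Matrix n n ℝ) :
    trace ((a • X₁ + (b * trace X₁) • (1 : Matrix n n ℝ) -
        (a • X₂ + (b * trace X₂) • (1 : Matrix n n ℝ))) * (X₁ - X₂)ᵀ) =
      a * trace ((X₁ - X₂) * (X₁ - X₂)ᵀ) + b * trace (X₁ - X₂) ^ 2 := by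
  have hsub : a • X₁ + (b * trace X₁) • (1 : Matrix n n ℝ) -
      (a • X₂ + (b * trace X₂) • (1 : Matrix n n ℝ)) =
      a • (X₁ - X₂) + (b * trace (X₁ - X₂)) • (1 : Matrix n n ℝ) := by
    rw [trace_sub, smul_sub, mul_sub, sub_smul]
    abel
  rw [hsub, add_mul, smul_mul_assoc, smul_mul_assoc, one_mul, trace_add, trace_smul, trace_smul,
    trace_transpose, smul_eq_mul, smul_eq_mul, sq, mul_assoc]

theorem Matrix.smul_diagonal_add_trace_smul_one (a b : ℝ) (l : n → ℝ) :
    a • diagonal l + (b * trace (diagonal l)) • (1 : Matrix n n ℝ) =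
      diagonal fun i => a * l i + b * ∑ j, l j := by
  ext i j
  by_cases hij : i = j <;> simp [hij, trace_diagonal]

theorem Matrix.trace_diagonal_mul_transpose_diagonal (s t : n → ℝ) :
    trace (diagonal s * (diagonal t)ᵀ) = ∑ i, s i * t i := by
  rw [diagonal_transpose, diagonal_mul_diagonal, trace_diagonal]

end IsotropicLaw

/-- Monotonicity in `log V` does not imply monotonicity in `V`:
for the Hencky stress `σ(V) = 2 μ log V + λ tr(log V) 𝟙` with `μ, λ > 0` and
`2 μ (2 log 18 − (1/3) log 6) < (λ/3) log 2`, taking `V₁ = diag(3, 1/3, 1)` and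
`V₂ = diag(1, 2, 1)` one has `⟨σ(V₁) − σ(V₂), V₁ − V₂⟩ < 0`; in particular `σ` is not
Hilbert-monotone in `V`, although `X ↦ 2 μ X + λ tr(X) 𝟙` is strictly Hilbert-monotone. -/
theorem hencky_not_monotone_in_V (μ lam : ℝ) (hμ : 0 < μ) (hlam : 0 < lam)
    (hcond : 2 * μ * (2 * Real.log 18 - (1 / 3) * Real.log 6) < (lam / 3) * Real.log 2)
    (σ : M3 → M3)
    (hσ : ∀ V : M3, σ V =
      (2 * μ) • matrixLog V + (lam * Matrix.trace (matrixLog V)) • (1 : M3))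
    (V₁ V₂ : M3)
    (hV₁ : V₁ = Matrix.diagonal ![3, 1 / 3, 1])
    (hV₂ : V₂ = Matrix.diagonal ![1, 2, 1]) :
    Matrix.trace ((σ V₁ - σ V₂) * (V₁ - V₂)ᵀ) < 0 ∧
    ¬ (∀ W₁ W₂ : M3, W₁.PosDef → W₂.PosDef → W₁ ≠ W₂ →
        0 < Matrix.trace ((σ W₁ - σ W₂) * (W₁ - W₂)ᵀ)) ∧
    ∀ X₁ X₂ : M3, X₁.IsSymm → X₂.IsSymm → X₁ ≠ X₂ →
      0 < Matrix.trace
        ((((2 * μ) • X₁ + (lam * Matrix.trace X₁) • (1 : M3)) -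
          ((2 * μ) • X₂ + (lam * Matrix.trace X₂) • (1 : M3))) * (X₁ - X₂)ᵀ) := by
  have hσ_diagonal (v : Fin 3 → ℝ) (hv : ∀ i, 0 < v i) :
      σ (diagonal v) = diagonal fun i => 2 * μ * Real.log (v i) + lam * ∑ j, Real.log (v j) := by
    rw [hσ, matrixLog_diagonal hv, smul_diagonal_add_trace_smul_one]
  have hv₁ : ∀ i, (0 : ℝ) < ![3, 1 / 3, 1] i := by intro i; fin_cases i <;> norm_num
  have hv₂ : ∀ i, (0 : ℝ) < ![1, 2, 1] i := by intro i; fin_cases i <;> norm_num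
  have hlog18 : Real.log 18 = Real.log 2 + 2 * Real.log 3 := by
    rw [show (18 : ℝ) = 2 * 3 ^ 2 by norm_num, Real.log_mul (by norm_num) (by norm_num),
      Real.log_pow, Nat.cast_ofNat]
  have hlog6 : Real.log 6 = Real.log 2 + Real.log 3 := by
    rw [show (6 : ℝ) = 2 * 3 by norm_num, Real.log_mul (by norm_num) (by norm_num)]
  have hneg : trace ((σ V₁ - σ V₂) * (V₁ - V₂)ᵀ) < 0 := by
    rw [hV₁, hV₂, hσ_diagonal _ hv₁, hσ_diagonal _ hv₂, diagonal_sub, diagonal_sub,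
      trace_diagonal_mul_transpose_diagonal]
    simp only [one_div, Fin.sum_univ_three, cons_val_zero, cons_val_one, cons_val, Real.log_inv,
      Real.log_one, add_neg_cancel, add_zero, mul_zero, zero_add, mul_neg, zero_sub, sub_self]
    rw [hlog18, hlog6] at hcond
    linarith
  refine ⟨hneg, fun hmono => ?_, fun X₁ X₂ _ _ hne => ?_⟩
  · subst hV₁ hV₂
    have hne : diagonal ![(3 : ℝ), 1 / 3, 1] ≠ diagonal ![1, 2, 1] := fun h => by
      simpa using congrFun (congrFun h 0) 0
    exact lt_asymm hneg (hmono _ _ (posDef_diagonal_iff.2 hv₁) (posDef_diagonal_iff.2 hv₂) hne)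
  · rw [trace_smul_add_trace_smul_one_sub_mul_transpose]
    have hpos := trace_mul_transpose_self_pos_s18 (sub_ne_zero.2 hne)
    positivity
end
end
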